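/- Let λ, μ, ν be partitions with λ ⊆ ν and let T ∈ EdgeTab(λ,μ,ν). Then the tuple of statistics (r_k^i(T), r_k^{i+1/2}(T))_{1 ≤ k ≤ ℓ(μ), 1 ≤ i ≤ ℓ(ν)} satisfies conditions (A)–(F) for (λ,μ,ν). -/

import Mathlib

/-!
Common definitions: partitions, edge-labeled tableaux (Thomas–Yong), reading
words, the polytope conditions (A)–(F), plus diagrams and (factorial) Schur
polynomials, following Adve–Robichaux–Yong,
"Vanishing of Littlewood-Richardson polynomials is in P".
-/

/-- A partition: a weakly decreasing, eventually-zero sequence of natural numbers.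
Internally `toFun` is 0-indexed: `toFun (i-1)` is the `i`-th part `λ_i`. -/
structure NPartition where
  toFun : ℕ → ℕ
  antitone' : ∀ ⦃i j : ℕ⦄, i ≤ j → toFun j ≤ toFun i
  eventually_zero' : ∃ N, ∀ i, N ≤ i → toFun i = 0

namespace NPartition

/-- The `i`-th part `λ_i` (1-indexed: `part 1` is the first part). -/
def part (p : NPartition) (i : ℕ) : ℕ := p.toFun (i - 1)

/-- `ℓ(λ)`: the number of nonzero parts. -/
noncomputable def len (p : NPartition) : ℕ := Set.ncard {i : ℕ | p.toFun i ≠ 0}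

/-- `|λ| = Σ_i λ_i`. -/
noncomputable def size (p : NPartition) : ℕ := ∑ᶠ i, p.toFun i

/-- The dilated partition `Nλ = (Nλ_1, Nλ_2, …)`. -/
def smul (N : ℕ) (p : NPartition) : NPartition where
  toFun i := N * p.toFun i
  antitone' _ _ h := Nat.mul_le_mul le_rfl (p.antitone' h)
  eventually_zero' := by
    obtain ⟨M, hM⟩ := p.eventually_zero'
    exact ⟨M, fun i hi => by rw [hM i hi, Nat.mul_zero]⟩

/-- `λ ⊆ ν`, i.e. `λ_i ≤ ν_i` for all `i`. -/
def Subset (lam nu : NPartition) : Prop := ∀ i, lam.part i ≤ nu.part i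

end NPartition

/-- `(i,j)` (1-indexed, matrix convention) is a box of the skew shape `ν/λ`,
i.e. `λ_i < j ≤ ν_i`. -/
def IsBox (lam nu : NPartition) (i j : ℕ) : Prop :=
  1 ≤ i ∧ lam.part i < j ∧ j ≤ nu.part i

instance (lam nu : NPartition) (i j : ℕ) : Decidable (IsBox lam nu i j) :=
  inferInstanceAs (Decidable (_ ∧ _ ∧ _))

/-- `(i+1/2, j)` is a horizontal edge position of the skew shape `ν/λ`:
`1 ≤ j ≤ ν_i` and `j > λ_{i+1}`. -/
def IsEdge (lam nu : NPartition) (i j : ℕ) : Prop :=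
  1 ≤ i ∧ 1 ≤ j ∧ j ≤ nu.part i ∧ lam.part (i + 1) < j

/-- An edge-labeled tableau of shape `ν/λ` and content `μ` (Thomas–Yong).
`box i j` is the label of box `(i,j)` (`0` outside the shape), and
`edge i j` is the finite set of labels on the edge `(i+1/2, j)`
(empty outside the shape). All labels are positive integers. -/
structure EdgeTableau (lam mu nu : NPartition) where
  subset : NPartition.Subset lam nu
  box : ℕ → ℕ → ℕ
  edge : ℕ → ℕ → Finset ℕ
  box_pos : ∀ i j, IsBox lam nu i j → 1 ≤ box i j
  box_eq_zero : ∀ i j, ¬ IsBox lam nu i j → box i j = 0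
  edge_pos : ∀ i j, ∀ e ∈ edge i j, 1 ≤ e
  edge_eq_empty : ∀ i j, ¬ IsEdge lam nu i j → edge i j = ∅
  row_weak : ∀ i j, IsBox lam nu i j → IsBox lam nu i (j+1) → box i j ≤ box i (j+1)
  col_strict : ∀ i j, IsBox lam nu i j → IsBox lam nu (i+1) j → box i j < box (i+1) j
  edge_gt_box : ∀ i j, IsBox lam nu i j → ∀ e ∈ edge i j, box i j < e
  edge_lt_box : ∀ i j, IsBox lam nu (i+1) j → ∀ e ∈ edge i j, e < box (i+1) j
  not_too_high : ∀ i j, ∀ e ∈ edge i j, e ≤ i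
  content : ∀ k, 1 ≤ k →
    Set.ncard {q : ℕ × ℕ | box q.1 q.2 = k} + Set.ncard {q : ℕ × ℕ | k ∈ edge q.1 q.2}
      = mu.part k

namespace EdgeTableau

variable {lam mu nu : NPartition}

/-- The (one-letter or empty) word contributed by the box `(i,j)`. -/
def boxWord (T : EdgeTableau lam mu nu) (i j : ℕ) : List ℕ :=
  if IsBox lam nu i j then [T.box i j] else []

/-- The word contributed by the edge `(i+1/2, j)`, read in increasing order. -/
def edgeWord (T : EdgeTableau lam mu nu) (i j : ℕ) : List ℕ :=
  (T.edge i j).sort (· ≤ ·)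

/-- The column reading word `w_c(T)`: columns right to left, each column top to
bottom, alternating the box label of row `i` with the edge set of row `i+1/2`. -/
noncomputable def wc (T : EdgeTableau lam mu nu) : List ℕ :=
  ((List.range (nu.part 1)).reverse).flatMap fun j0 =>
    (List.range nu.len).flatMap fun i0 =>
      T.boxWord (i0+1) (j0+1) ++ T.edgeWord (i0+1) (j0+1)

/-- The row reading word `w_r(T)`: for `i = 1, 2, …`, the boxes of row `i`
right to left, then the edge sets of row `i+1/2` right to left. -/
noncomputable def wr (T : EdgeTableau lam mu nu) : List ℕ :=
  (List.range nu.len).flatMap fun i0 =>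
    (((List.range (nu.part 1)).reverse).flatMap fun j0 => T.boxWord (i0+1) (j0+1)) ++
    (((List.range (nu.part 1)).reverse).flatMap fun j0 => T.edgeWord (i0+1) (j0+1))

end EdgeTableau

/-- A word is lattice if, for every `k ≥ 1`, every prefix contains at least as
many letters `k` as letters `k+1`. -/
def IsLatticeWord (w : List ℕ) : Prop :=
  ∀ k, 1 ≤ k → ∀ t, (w.take t).count (k+1) ≤ (w.take t).count k

/-- `EdgeTab(λ,μ,ν)`: edge-labeled tableaux of shape `ν/λ` and content `μ`
whose column reading word is lattice. -/
def EdgeTab (lam mu nu : NPartition) : Set (EdgeTableau lam mu nu) :=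
  {T | IsLatticeWord T.wc}

/-! ### Positions and reading-order prefixes -/

/-- A (horizontal) position of a tableau: a box `(i,j)` or an edge `(i+1/2, j)`. -/
inductive HPos
  | box (i j : ℕ)
  | edge (i j : ℕ)

namespace HPos

/-- Twice the (half-integer) row index: `2i` for a box in row `i`,
`2i+1` for an edge in row `i+1/2`. -/
def rowIdx : HPos → ℕ
  | .box i _ => 2 * i
  | .edge i _ => 2 * i + 1

/-- The column of a position. -/
def col : HPos → ℕ
  | .box _ j => j
  | .edge _ j => j

/-- `p` is weakly northeast of `q`: weakly above and weakly to the right. -/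
def NorthEastOf (p q : HPos) : Prop := p.rowIdx ≤ q.rowIdx ∧ q.col ≤ p.col

/-- `p` is read no later than `q` in the column reading order (columns right to
left, each column top to bottom); equivalently, every label at `p` is read by
the prefix `w_c|_q` of the column reading word ending after position `q`. -/
def colLE (p q : HPos) : Prop := q.col < p.col ∨ (p.col = q.col ∧ p.rowIdx ≤ q.rowIdx)

/-- `p` is read no later than `q` in the row reading order (rows top to bottom,
each row right to left); equivalently, every label at `p` is read by the
prefix `w_r|_q` of the row reading word ending after position `q`. -/
def rowLE (p q : HPos) : Prop := p.rowIdx < q.rowIdx ∨ (p.rowIdx = q.rowIdx ∧ q.col ≤ p.col)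

end HPos

/-- `p` is a valid (box or edge) position of the skew shape `ν/λ`. -/
def IsPos (lam nu : NPartition) : HPos → Prop
  | .box i j => IsBox lam nu i j
  | .edge i j => IsEdge lam nu i j

/-- The tableau `T` carries the label `ℓ` at the position `p`. -/
def EdgeTableau.HasLabel {lam mu nu : NPartition} (T : EdgeTableau lam mu nu) :
    HPos → ℕ → Prop
  | .box i j, ℓ => IsBox lam nu i j ∧ T.box i j = ℓ
  | .edge i j, ℓ => ℓ ∈ T.edge i j

/-! ### The statistics `r_k^i(T)`, `r_k^{i+1/2}(T)` and conditions (A)–(F) -/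

/-- `r_k^i(T)`: the number of box labels `k` in row `i` of `T`. -/
noncomputable def EdgeTableau.rbox {lam mu nu : NPartition} (T : EdgeTableau lam mu nu)
    (k i : ℕ) : ℕ :=
  Set.ncard {j : ℕ | IsBox lam nu i j ∧ T.box i j = k}

/-- `r_k^{i+1/2}(T)`: the number of edge labels `k` on the edges `(i+1/2, j)` of `T`. -/
noncomputable def EdgeTableau.redge {lam mu nu : NPartition} (T : EdgeTableau lam mu nu)
    (k i : ℕ) : ℕ :=
  Set.ncard {j : ℕ | k ∈ T.edge i j}

open Finset in
/-- Conditions (A)–(F) of Adve–Robichaux–Yong for the triple `(λ,μ,ν)` on the real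
tuple `(r_k^i, r_k^{i+1/2})_{1 ≤ k ≤ ℓ(μ), 1 ≤ i ≤ ℓ(ν)}`, encoded as a pair of
functions `rb re : ℕ → ℕ → ℝ` (`rb k i = r_k^i`, `re k i = r_k^{i+1/2}`) that
vanish outside the index range (which also encodes the paper's conventions
`r_{ℓ(μ)+1}^i = r_{ℓ(μ)+1}^{i+1/2} = 0` and `r_k^{ℓ(ν)+1} = 0`).
Membership in the polytope `P(λ,μ,ν)` is exactly this predicate. -/
def SatisfiesAF (lam mu nu : NPartition) (rb re : ℕ → ℕ → ℝ) : Prop :=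
  -- the tuple is indexed by `1 ≤ k ≤ ℓ(μ)`, `1 ≤ i ≤ ℓ(ν)`; it vanishes elsewhere
  (∀ k i, ¬(1 ≤ k ∧ k ≤ mu.len ∧ 1 ≤ i ∧ i ≤ nu.len) → rb k i = 0 ∧ re k i = 0) ∧
  -- (A) nonnegativity
  (∀ k i, 0 ≤ rb k i ∧ 0 ≤ re k i) ∧
  -- (B) shape constraints
  (∀ i, 1 ≤ i → (lam.part i : ℝ) + ∑ k ∈ Icc 1 mu.len, rb k i = (nu.part i : ℝ)) ∧
  -- (C) content constraints
  (∀ k, 1 ≤ k → ∑ i ∈ Icc 1 nu.len, (rb k i + re k i) = (mu.part k : ℝ)) ∧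
  -- (D) gap constraints
  (∀ k i, 1 ≤ k → k ≤ mu.len → 1 ≤ i → i ≤ nu.len →
    re k i ≤ ((lam.part i : ℝ) + ∑ k' ∈ Ico 1 k, rb k' i)
      - ((lam.part (i+1) : ℝ) + ∑ k' ∈ Icc 1 k, rb k' (i+1))) ∧
  -- (E) no label is too high
  (∀ k i, i < k → rb k i = 0 ∧ re k i = 0) ∧
  -- (F) reverse lattice word constraints
  (∀ k i, 1 ≤ k → k ≤ mu.len → 1 ≤ i → i ≤ nu.len →
    rb (k+1) i + ∑ i' ∈ Ico 1 i, (rb (k+1) i' + re (k+1) i')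
      ≤ ∑ i' ∈ Ico 1 i, (rb k i' + re k i'))

/-! ### Plus diagrams and (factorial) Schur polynomials -/

/-- The initial diagram of `λ` in the `n`-row grid: a `+` in each position
`(i,j)` with `1 ≤ i ≤ n`, `1 ≤ j ≤ λ_i`. -/
def initialDiagram (n : ℕ) (lam : NPartition) : Finset (ℕ × ℕ) :=
  (Finset.Icc 1 n ×ˢ Finset.Icc 1 (lam.part 1)).filter fun q => q.2 ≤ lam.part q.1

/-- A local move in the `n × m` grid: a `+` at `(i,j)` moves to `(i+1,j+1)`,
provided `(i+1,j+1)` lies in the grid and `(i,j+1)`, `(i+1,j)`, `(i+1,j+1)`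
carry no `+`. -/
def IsLocalMove (n m : ℕ) (P Q : Finset (ℕ × ℕ)) : Prop :=
  ∃ i j, (i, j) ∈ P ∧ i + 1 ≤ n ∧ j + 1 ≤ m ∧
    (i, j+1) ∉ P ∧ (i+1, j) ∉ P ∧ (i+1, j+1) ∉ P ∧
    Q = insert (i+1, j+1) (P.erase (i, j))

/-- `Plus(λ)`: all configurations obtainable from the initial diagram of `λ`
in the `n × m` grid by finite sequences of local moves. -/
def PlusSet (n m : ℕ) (lam : NPartition) : Set (Finset (ℕ × ℕ)) :=
  {P | Relation.ReflTransGen (IsLocalMove n m) (initialDiagram n lam) P}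

open MvPolynomial in
/-- `wt_{x,y}(P) = ∏_{(i,j) ∈ P} (x_i - y_j)`, in `ℤ[x_1, x_2, …, y_1, y_2, …]`
(the variable `Sum.inl i` is `x_i`, and `Sum.inr j` is `y_j`). -/
noncomputable def wtxy (P : Finset (ℕ × ℕ)) : MvPolynomial (ℕ ⊕ ℕ) ℤ :=
  ∏ q ∈ P, (X (Sum.inl q.1) - X (Sum.inr q.2))

open MvPolynomial in
/-- `wt_x(P) = ∏_i x_i^{a_i(P)}`, where `a_i(P)` is the number of `+`'s in row `i`. -/
noncomputable def wtx (P : Finset (ℕ × ℕ)) : MvPolynomial (ℕ ⊕ ℕ) ℤ :=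
  ∏ q ∈ P, X (Sum.inl q.1)

/-- The factorial Schur polynomial `s_λ(X;Y) = Σ_{P ∈ Plus(λ)} wt_{x,y}(P)`
(computed in the `n × m` grid). -/
noncomputable def factorialSchur (n m : ℕ) (lam : NPartition) : MvPolynomial (ℕ ⊕ ℕ) ℤ :=
  ∑ᶠ P ∈ PlusSet n m lam, wtxy P

/-- The Schur polynomial `s_λ(X) = Σ_{P ∈ Plus(λ)} wt_x(P)`
(computed in the `n × m` grid). -/
noncomputable def schurPoly (n m : ℕ) (lam : NPartition) : MvPolynomial (ℕ ⊕ ℕ) ℤ :=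
  ∑ᶠ P ∈ PlusSet n m lam, wtx P

open MvPolynomial in
/-- The substitution `y_j = 0` for all `j` (keeping the `x`-variables). -/
noncomputable def setYtoZero : MvPolynomial (ℕ ⊕ ℕ) ℤ →+* MvPolynomial (ℕ ⊕ ℕ) ℤ :=
  (aeval (Sum.elim (fun i => (X (Sum.inl i) : MvPolynomial (ℕ ⊕ ℕ) ℤ)) fun _ => 0)).toRingHom

open MvPolynomial in
/-- Interpret a polynomial in `ℤ[y_1, y_2, …]` inside `ℤ[x_1, …, y_1, …]`. -/
noncomputable def yPoly (p : MvPolynomial ℕ ℤ) : MvPolynomial (ℕ ⊕ ℕ) ℤ :=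
  rename Sum.inr p

namespace ARY
open Finset

lemma toFun_ne_zero_iff (p : NPartition) (n : ℕ) : p.toFun n ≠ 0 ↔ n < p.len := by
  obtain ⟨N, hN⟩ := p.eventually_zero'
  have hfin : {i : ℕ | p.toFun i ≠ 0}.Finite := by
    apply (Set.finite_Iio N).subset
    intro i hi
    simp only [Set.mem_Iio]
    by_contra h
    exact hi (hN i (le_of_not_gt h))
  constructor
  · intro h
    have hsub : Set.Iic n ⊆ {i : ℕ | p.toFun i ≠ 0} := by
      intro i hi
      simp only [Set.mem_Iic] at hi
      intro h0
      exact h (Nat.le_antisymm (h0 ▸ p.antitone' hi) (Nat.zero_le _))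
    have hle := Set.ncard_le_ncard hsub hfin
    rw [show Set.Iic n = ↑(Finset.Iic n) by simp, Set.ncard_coe_finset, Nat.card_Iic] at hle
    unfold NPartition.len
    omega
  · intro h h0
    have hsub : {i : ℕ | p.toFun i ≠ 0} ⊆ Set.Iio n := by
      intro i hi
      simp only [Set.mem_setOf_eq] at hi
      simp only [Set.mem_Iio]
      by_contra hni
      exact hi (Nat.le_antisymm (h0 ▸ p.antitone' (le_of_not_gt hni)) (Nat.zero_le _))
    have hle := Set.ncard_le_ncard hsub (Set.finite_Iio n)
    rw [show Set.Iio n = ↑(Finset.Iio n) by simp, Set.ncard_coe_finset, Nat.card_Iio] at hle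
    unfold NPartition.len at h
    omega

lemma part_pos_iff (p : NPartition) {i : ℕ} (hi : 1 ≤ i) : 1 ≤ p.part i ↔ i ≤ p.len := by
  unfold NPartition.part
  have := toFun_ne_zero_iff p (i - 1)
  omega

lemma part_anti (p : NPartition) : Antitone p.part :=
  fun _ _ h => p.antitone' (Nat.sub_le_sub_right h 1)

lemma part_eq_zero_of_len_lt (p : NPartition) {i : ℕ} (h : p.len < i) : p.part i = 0 := by
  have h1 : 1 ≤ i := by omega
  have := part_pos_iff p h1
  omega

variable {lam mu nu : NPartition} (T : EdgeTableau lam mu nu)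

lemma isEdge_of_mem {i j e : ℕ} (h : e ∈ T.edge i j) : IsEdge lam nu i j := by
  by_contra hc
  rw [T.edge_eq_empty i j hc] at h
  exact absurd h (Finset.notMem_empty e)

lemma isBox_of_label {i j k : ℕ} (hk : 1 ≤ k) (h : T.box i j = k) : IsBox lam nu i j := by
  by_contra hc
  rw [T.box_eq_zero i j hc] at h
  omega

lemma box_bounds {i j : ℕ} (h : IsBox lam nu i j) :
    1 ≤ i ∧ i ≤ nu.len ∧ 1 ≤ j ∧ j ≤ nu.part 1 := by
  obtain ⟨hi, hl, hu⟩ := h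
  have h1 : 1 ≤ j := by omega
  have hlen := (part_pos_iff nu hi).mp (le_trans h1 hu)
  exact ⟨hi, hlen, h1, le_trans hu (part_anti nu hi)⟩

lemma edge_bounds {i j : ℕ} (h : IsEdge lam nu i j) :
    1 ≤ i ∧ i ≤ nu.len ∧ 1 ≤ j ∧ j ≤ nu.part 1 := by
  obtain ⟨hi, h1, hu, _⟩ := h
  have hlen := (part_pos_iff nu hi).mp (le_trans h1 hu)
  exact ⟨hi, hlen, h1, le_trans hu (part_anti nu hi)⟩

lemma box_mono_row {i j₁ : ℕ} (h1 : IsBox lam nu i j₁) :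
    ∀ j₂, j₁ ≤ j₂ → j₂ ≤ nu.part i → T.box i j₁ ≤ T.box i j₂ := by
  intro j₂ hle
  induction j₂, hle using Nat.le_induction with
  | base => intro _; exact le_rfl
  | succ j hj ih =>
    intro h2
    obtain ⟨hi1, hl1, hu1⟩ := h1
    have hbj : IsBox lam nu i j := ⟨hi1, by omega, by omega⟩
    exact le_trans (ih (by omega)) (T.row_weak i j hbj ⟨hi1, by omega, h2⟩)

lemma box_mono_col {i₁ j : ℕ} (h1 : IsBox lam nu i₁ j) :
    ∀ i₂, i₁ ≤ i₂ → IsBox lam nu i₂ j → T.box i₁ j ≤ T.box i₂ j := by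
  intro i₂ hle
  induction i₂, hle using Nat.le_induction with
  | base => intro _; exact le_rfl
  | succ i hi ih =>
    intro h2
    have hbi : IsBox lam nu i j :=
      ⟨le_trans h1.1 hi, lt_of_le_of_lt (part_anti lam hi) h1.2.1,
        le_trans h2.2.2 (part_anti nu (by omega))⟩
    exact le_trans (ih hbi) (le_of_lt (T.col_strict i j hbi h2))

lemma boxSet_eq (k : ℕ) (hk : 1 ≤ k) :
    {q : ℕ × ℕ | T.box q.1 q.2 = k} =
      ↑((Finset.Icc 1 nu.len ×ˢ Finset.Icc 1 (nu.part 1)).filter fun q => T.box q.1 q.2 = k) := by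
  ext ⟨i, j⟩
  simp only [Set.mem_setOf_eq, Finset.coe_filter, Finset.mem_product, Finset.mem_Icc,
    Set.mem_setOf_eq, Finset.mem_coe, Finset.mem_filter]
  constructor
  · intro h
    obtain ⟨a, b, c, d⟩ := box_bounds (isBox_of_label T hk h)
    exact ⟨⟨⟨a, b⟩, ⟨c, d⟩⟩, h⟩
  · exact fun h => h.2

lemma edgeSet_eq (k : ℕ) :
    {q : ℕ × ℕ | k ∈ T.edge q.1 q.2} =
      ↑((Finset.Icc 1 nu.len ×ˢ Finset.Icc 1 (nu.part 1)).filter fun q => k ∈ T.edge q.1 q.2) := by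
  ext ⟨i, j⟩
  simp only [Set.mem_setOf_eq, Finset.coe_filter, Finset.mem_product, Finset.mem_Icc,
    Set.mem_setOf_eq, Finset.mem_coe, Finset.mem_filter]
  constructor
  · intro h
    obtain ⟨a, b, c, d⟩ := edge_bounds (isEdge_of_mem T h)
    exact ⟨⟨⟨a, b⟩, ⟨c, d⟩⟩, h⟩
  · exact fun h => h.2

lemma content_card (k : ℕ) (hk : 1 ≤ k) :
    ((Finset.Icc 1 nu.len ×ˢ Finset.Icc 1 (nu.part 1)).filter fun q => T.box q.1 q.2 = k).card +
    ((Finset.Icc 1 nu.len ×ˢ Finset.Icc 1 (nu.part 1)).filter fun q => k ∈ T.edge q.1 q.2).card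
      = mu.part k := by
  have h := T.content k hk
  rwa [boxSet_eq T k hk, edgeSet_eq T k, Set.ncard_coe_finset, Set.ncard_coe_finset] at h

lemma mu_part_pos_of_box {i j : ℕ} (hb : IsBox lam nu i j) : 1 ≤ mu.part (T.box i j) := by
  have hk : 1 ≤ T.box i j := T.box_pos i j hb
  have hc := content_card T (T.box i j) hk
  have hm : (i, j) ∈ (Finset.Icc 1 nu.len ×ˢ Finset.Icc 1 (nu.part 1)).filter
      fun q => T.box q.1 q.2 = T.box i j := by
    obtain ⟨a, b, c, d⟩ := box_bounds hb
    refine Finset.mem_filter.mpr ⟨?_, rfl⟩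
    simp only [Finset.mem_product, Finset.mem_Icc]
    exact ⟨⟨a, b⟩, ⟨c, d⟩⟩
  have := Finset.card_pos.mpr ⟨_, hm⟩
  omega

lemma mu_part_pos_of_edge {i j k : ℕ} (h : k ∈ T.edge i j) : 1 ≤ mu.part k := by
  have hk : 1 ≤ k := T.edge_pos i j k h
  have hc := content_card T k hk
  have hm : (i, j) ∈ (Finset.Icc 1 nu.len ×ˢ Finset.Icc 1 (nu.part 1)).filter
      fun q => k ∈ T.edge q.1 q.2 := by
    obtain ⟨a, b, c, d⟩ := edge_bounds (isEdge_of_mem T h)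
    refine Finset.mem_filter.mpr ⟨?_, h⟩
    simp only [Finset.mem_product, Finset.mem_Icc]
    exact ⟨⟨a, b⟩, ⟨c, d⟩⟩
  have := Finset.card_pos.mpr ⟨_, hm⟩
  omega

lemma box_le_muLen {i j : ℕ} (hb : IsBox lam nu i j) : T.box i j ≤ mu.len :=
  (part_pos_iff mu (T.box_pos i j hb)).mp (mu_part_pos_of_box T hb)

lemma edge_le_muLen {i j k : ℕ} (h : k ∈ T.edge i j) : k ≤ mu.len :=
  (part_pos_iff mu (T.edge_pos i j k h)).mp (mu_part_pos_of_edge T h)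

lemma rbox_eq_card (k i : ℕ) :
    T.rbox k i
      = ((Finset.Icc 1 (nu.part 1)).filter fun j => IsBox lam nu i j ∧ T.box i j = k).card := by
  rw [EdgeTableau.rbox, ← Set.ncard_coe_finset]
  congr 1
  ext j
  simp only [Set.mem_setOf_eq, Finset.coe_filter, Finset.mem_Icc, Set.mem_setOf_eq]
  constructor
  · rintro ⟨hb, he⟩
    obtain ⟨_, _, c, d⟩ := box_bounds hb
    exact ⟨⟨c, d⟩, hb, he⟩
  · exact fun h => h.2

lemma redge_eq_card (k i : ℕ) :
    T.redge k i = ((Finset.Icc 1 (nu.part 1)).filter fun j => k ∈ T.edge i j).card := by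
  rw [EdgeTableau.redge, ← Set.ncard_coe_finset]
  congr 1
  ext j
  simp only [Set.mem_setOf_eq, Finset.coe_filter, Finset.mem_Icc, Set.mem_setOf_eq]
  constructor
  · intro h
    obtain ⟨_, _, c, d⟩ := edge_bounds (isEdge_of_mem T h)
    exact ⟨⟨c, d⟩, h⟩
  · exact fun h => h.2

lemma rbox_eq_zero {k i : ℕ} (h : ¬(1 ≤ k ∧ k ≤ mu.len ∧ 1 ≤ i ∧ i ≤ nu.len)) :
    T.rbox k i = 0 := by
  rw [rbox_eq_card, Finset.card_eq_zero, Finset.filter_eq_empty_iff]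
  rintro j hj ⟨hb, he⟩
  obtain ⟨a, b, _, _⟩ := box_bounds hb
  have h1 := T.box_pos i j hb
  have h2 := box_le_muLen T hb
  exact h ⟨by omega, by omega, a, b⟩

lemma redge_eq_zero {k i : ℕ} (h : ¬(1 ≤ k ∧ k ≤ mu.len ∧ 1 ≤ i ∧ i ≤ nu.len)) :
    T.redge k i = 0 := by
  rw [redge_eq_card, Finset.card_eq_zero, Finset.filter_eq_empty_iff]
  intro j hj hm
  obtain ⟨a, b, _, _⟩ := edge_bounds (isEdge_of_mem T hm)
  have h1 := T.edge_pos i j k hm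
  have h2 := edge_le_muLen T hm
  exact h ⟨by omega, by omega, a, b⟩

lemma redge_eq_zero_of_lt {k i : ℕ} (h : i < k) : T.redge k i = 0 := by
  rw [redge_eq_card, Finset.card_eq_zero, Finset.filter_eq_empty_iff]
  intro j hj hm
  have := T.not_too_high i j k hm
  omega

lemma rbox_zero_high {k i : ℕ} (h : nu.len < i) : T.rbox k i = 0 :=
  rbox_eq_zero T (by omega)

lemma redge_zero_high {k i : ℕ} (h : nu.len < i) : T.redge k i = 0 :=
  redge_eq_zero T (by omega)

/-- A subset of `Icc (a+1) b` downward closed within the interval is an initial interval. -/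
lemma dcl_eq_Icc {S : Finset ℕ} {a b : ℕ} (hS : S ⊆ Finset.Icc (a + 1) b)
    (hdc : ∀ j ∈ S, ∀ j', a < j' → j' ≤ j → j' ∈ S) :
    S = Finset.Icc (a + 1) (a + S.card) := by
  ext j
  constructor
  · intro hj
    have hjb := Finset.mem_Icc.mp (hS hj)
    have hsub : Finset.Icc (a + 1) j ⊆ S := by
      intro x hx
      have hx' := Finset.mem_Icc.mp hx
      exact hdc j hj x (by omega) hx'.2
    have := Finset.card_le_card hsub
    rw [Nat.card_Icc] at this
    rw [Finset.mem_Icc]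
    omega
  · intro hj
    rw [Finset.mem_Icc] at hj
    by_contra hjS
    have hsub : S ⊆ Finset.Icc (a + 1) (j - 1) := by
      intro x hx
      have hxb := Finset.mem_Icc.mp (hS hx)
      rw [Finset.mem_Icc]
      rcases Nat.lt_or_ge x j with h' | h'
      · omega
      · exact absurd (hdc x hx j (by omega) h') hjS
    have := Finset.card_le_card hsub
    rw [Nat.card_Icc] at this
    omega

lemma sum_rbox_eq (i m : ℕ) :
    ∑ k ∈ Finset.Icc 1 m, T.rbox k i
      = ((Finset.Icc 1 (nu.part 1)).filter fun j => IsBox lam nu i j ∧ T.box i j ≤ m).card := by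
  simp_rw [rbox_eq_card, Finset.card_filter]
  rw [Finset.sum_comm]
  apply Finset.sum_congr rfl
  intro j _
  by_cases hb : IsBox lam nu i j ∧ T.box i j ≤ m
  · rw [if_pos hb]
    have h1 : 1 ≤ T.box i j := T.box_pos i j hb.1
    have : ∀ k ∈ Finset.Icc 1 m, (if IsBox lam nu i j ∧ T.box i j = k then 1 else 0)
        = if T.box i j = k then 1 else 0 := by
      intro k _
      by_cases he : T.box i j = k
      · rw [if_pos ⟨hb.1, he⟩, if_pos he]
      · rw [if_neg (fun hc => he hc.2), if_neg he]
    rw [Finset.sum_congr rfl this, Finset.sum_ite_eq (Finset.Icc 1 m) (T.box i j) (fun _ => 1)]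
    rw [if_pos (Finset.mem_Icc.mpr ⟨h1, hb.2⟩)]
  · rw [if_neg hb]
    apply Finset.sum_eq_zero
    intro k hk
    rw [Finset.mem_Icc] at hk
    rw [if_neg]
    rintro ⟨hb', he⟩
    exact hb ⟨hb', by omega⟩

/-- Boxes of row `i` with label `≤ m` form an initial interval of the row. -/
lemma initial_interval (i m : ℕ) (hi : 1 ≤ i) :
    (Finset.Icc 1 (nu.part 1)).filter (fun j => IsBox lam nu i j ∧ T.box i j ≤ m)
      = Finset.Icc (lam.part i + 1) (lam.part i + ∑ k ∈ Finset.Icc 1 m, T.rbox k i) := by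
  rw [sum_rbox_eq]
  apply dcl_eq_Icc (b := nu.part i)
  · intro j hj
    rw [Finset.mem_filter] at hj
    rw [Finset.mem_Icc]
    exact ⟨hj.2.1.2.1, hj.2.1.2.2⟩
  · intro j hj j' h1 h2
    rw [Finset.mem_filter] at hj ⊢
    obtain ⟨hmem, hb, hle⟩ := hj
    have hb' : IsBox lam nu i j' := ⟨hi, h1, le_trans h2 hb.2.2⟩
    refine ⟨?_, hb', le_trans (box_mono_row T hb' j h2 hb.2.2) hle⟩
    rw [Finset.mem_Icc] at hmem ⊢
    omega

lemma B_nat (i : ℕ) (hi : 1 ≤ i) :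
    lam.part i + ∑ k ∈ Finset.Icc 1 mu.len, T.rbox k i = nu.part i := by
  have h1 : (Finset.Icc 1 (nu.part 1)).filter (fun j => IsBox lam nu i j ∧ T.box i j ≤ mu.len)
      = (Finset.Icc 1 (nu.part 1)).filter (fun j => IsBox lam nu i j) := by
    apply Finset.filter_congr
    intro j _
    constructor
    · exact fun h => h.1
    · exact fun h => ⟨h, box_le_muLen T h⟩
  have h2 : (Finset.Icc 1 (nu.part 1)).filter (fun j => IsBox lam nu i j)
      = Finset.Icc (lam.part i + 1) (nu.part i) := by
    have hM : nu.part i ≤ nu.part 1 := part_anti nu hi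
    ext j
    rw [Finset.mem_filter]
    simp only [Finset.mem_filter, Finset.mem_Icc, IsBox]
    omega
  have h3 := sum_rbox_eq T i mu.len
  rw [h1, h2, Nat.card_Icc] at h3
  have h4 : lam.part i ≤ nu.part i := T.subset i
  omega

lemma C_nat (k : ℕ) (hk : 1 ≤ k) :
    ∑ i ∈ Finset.Icc 1 nu.len, (T.rbox k i + T.redge k i) = mu.part k := by
  have hc := content_card T k hk
  have hbox : ((Finset.Icc 1 nu.len ×ˢ Finset.Icc 1 (nu.part 1)).filter
      fun q => T.box q.1 q.2 = k).card = ∑ i ∈ Finset.Icc 1 nu.len, T.rbox k i := by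
    rw [Finset.card_filter, Finset.sum_product]
    apply Finset.sum_congr rfl
    intro i _
    rw [rbox_eq_card, Finset.card_filter]
    apply Finset.sum_congr rfl
    intro j _
    by_cases h : T.box i j = k
    · rw [if_pos h, if_pos ⟨isBox_of_label T hk h, h⟩]
    · rw [if_neg h, if_neg (fun hc' => h hc'.2)]
  have hedge : ((Finset.Icc 1 nu.len ×ˢ Finset.Icc 1 (nu.part 1)).filter
      fun q => k ∈ T.edge q.1 q.2).card = ∑ i ∈ Finset.Icc 1 nu.len, T.redge k i := by
    rw [Finset.card_filter, Finset.sum_product]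
    apply Finset.sum_congr rfl
    intro i _
    rw [redge_eq_card, Finset.card_filter]
  rw [hbox, hedge] at hc
  rw [← hc, ← Finset.sum_add_distrib]

lemma D_nat (k i : ℕ) (hk : 1 ≤ k) (hi : 1 ≤ i) :
    T.redge k i + (lam.part (i + 1) + ∑ k' ∈ Finset.Icc 1 k, T.rbox k' (i + 1))
      ≤ lam.part i + ∑ k' ∈ Finset.Icc 1 (k - 1), T.rbox k' i := by
  set A := lam.part i + ∑ k' ∈ Finset.Icc 1 (k - 1), T.rbox k' i with hA
  set B := lam.part (i + 1) + ∑ k' ∈ Finset.Icc 1 k, T.rbox k' (i + 1) with hB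
  have hIA := initial_interval T i (k - 1) hi
  have hIB := initial_interval T (i + 1) k (by omega)
  rw [← hA] at hIA
  rw [← hB] at hIB
  -- Step 1 : B ≤ A
  have hBA : B ≤ A := by
    rcases Nat.lt_or_ge (lam.part (i + 1)) B with hc | hc
    · -- the box (i+1, B) exists with label ≤ k
      have hmB : B ∈ (Finset.Icc 1 (nu.part 1)).filter
          (fun j => IsBox lam nu (i + 1) j ∧ T.box (i + 1) j ≤ k) := by
        rw [hIB, Finset.mem_Icc]
        omega
      rw [Finset.mem_filter] at hmB
      obtain ⟨_, hbB, hlB⟩ := hmB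
      rcases Nat.lt_or_ge (lam.part i) B with hc2 | hc2
      · -- box (i, B) exists, label < k
        have hbiB : IsBox lam nu i B := ⟨hi, hc2, le_trans hbB.2.2 (part_anti nu (by omega))⟩
        have hstrict := T.col_strict i B hbiB hbB
        have hmem : B ∈ (Finset.Icc 1 (nu.part 1)).filter
            (fun j => IsBox lam nu i j ∧ T.box i j ≤ k - 1) := by
          rw [Finset.mem_filter]
          obtain ⟨_, _, c, d⟩ := box_bounds hbiB
          exact ⟨Finset.mem_Icc.mpr ⟨c, d⟩, hbiB, by omega⟩
        rw [hIA, Finset.mem_Icc] at hmem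
        omega
      · have : lam.part (i + 1) ≤ lam.part i := part_anti lam (by omega)
        omega
    · have : lam.part (i + 1) ≤ lam.part i := part_anti lam (by omega)
      omega
  -- Step 2 : the edges with label k in row i+1/2 live in Icc (B+1) A
  have hsub : (Finset.Icc 1 (nu.part 1)).filter (fun j => k ∈ T.edge i j)
      ⊆ Finset.Icc (B + 1) A := by
    intro j hj
    rw [Finset.mem_filter] at hj
    obtain ⟨hjM, hjm⟩ := hj
    obtain ⟨_, hj1, hju, hjl⟩ := isEdge_of_mem T hjm
    rw [Finset.mem_Icc]
    constructor
    · -- j > B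
      by_contra hc
      push_neg at hc
      have hmB : j ∈ (Finset.Icc 1 (nu.part 1)).filter
          (fun j' => IsBox lam nu (i + 1) j' ∧ T.box (i + 1) j' ≤ k) := by
        rw [hIB, Finset.mem_Icc]
        omega
      rw [Finset.mem_filter] at hmB
      have := T.edge_lt_box i j hmB.2.1 k hjm
      omega
    · -- j ≤ A
      rcases Nat.lt_or_ge (lam.part i) j with hc | hc
      · have hbij : IsBox lam nu i j := ⟨hi, hc, hju⟩
        have := T.edge_gt_box i j hbij k hjm
        have hmem : j ∈ (Finset.Icc 1 (nu.part 1)).filter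
            (fun j' => IsBox lam nu i j' ∧ T.box i j' ≤ k - 1) := by
          rw [Finset.mem_filter]
          exact ⟨hjM, hbij, by omega⟩
        rw [hIA, Finset.mem_Icc] at hmem
        omega
      · omega
  have hcard := Finset.card_le_card hsub
  rw [Nat.card_Icc] at hcard
  rw [redge_eq_card]
  omega

lemma count_flatMap {α : Type*} (v : ℕ) (l : List α) (f : α → List ℕ) :
    ((l.flatMap f).count v) = (l.map fun a => (f a).count v).sum := by
  induction l with
  | nil => simp
  | cons a l ih => simp [List.flatMap_cons, List.count_append, ih]

lemma sum_map_range (g : ℕ → ℕ) (n : ℕ) :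
    ((List.range n).map g).sum = ∑ t ∈ Finset.range n, g t := by
  induction n with
  | zero => simp
  | succ n ih => rw [List.range_succ]; simp [ih, Finset.sum_range_succ]

lemma count_boxWord (v i j : ℕ) :
    (T.boxWord i j).count v = if IsBox lam nu i j ∧ T.box i j = v then 1 else 0 := by
  unfold EdgeTableau.boxWord
  by_cases hb : IsBox lam nu i j
  · rw [if_pos hb]
    by_cases he : T.box i j = v
    · rw [if_pos ⟨hb, he⟩, he]
      simp
    · rw [if_neg (fun hc => he hc.2)]
      simp [List.count_singleton, he]
  · rw [if_neg hb, if_neg (fun hc => hb hc.1)]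
    simp

lemma count_edgeWord (v i j : ℕ) :
    (T.edgeWord i j).count v = if v ∈ T.edge i j then 1 else 0 := by
  unfold EdgeTableau.edgeWord
  by_cases h : v ∈ T.edge i j
  · rw [if_pos h]
    exact List.count_eq_one_of_mem (Finset.sort_nodup _ _) ((Finset.mem_sort _).mpr h)
  · rw [if_neg h]
    exact List.count_eq_zero_of_not_mem (fun hc => h ((Finset.mem_sort _).mp hc))

/-- number of occurrences of the label `v` in column `c`. -/
noncomputable def colCnt (v c : ℕ) : ℕ :=
  ∑ i0 ∈ Finset.range nu.len,
    ((if IsBox lam nu (i0 + 1) c ∧ T.box (i0 + 1) c = v then 1 else 0) +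
      (if v ∈ T.edge (i0 + 1) c then 1 else 0))

/-- occurrences of `v` in column `c` at row index (twice the half-integer row) `≤ r`. -/
noncomputable def colCntR (v c r : ℕ) : ℕ :=
  ∑ i0 ∈ Finset.range nu.len,
    ((if IsBox lam nu (i0 + 1) c ∧ T.box (i0 + 1) c = v ∧ 2 * (i0 + 1) ≤ r then 1 else 0) +
      (if v ∈ T.edge (i0 + 1) c ∧ 2 * (i0 + 1) + 1 ≤ r then 1 else 0))

lemma colCntR_le_colCnt (v c r : ℕ) : colCntR T v c r ≤ colCnt T v c := by
  apply Finset.sum_le_sum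
  intro i0 _
  have h1 : (if IsBox lam nu (i0 + 1) c ∧ T.box (i0 + 1) c = v ∧ 2 * (i0 + 1) ≤ r then 1 else 0)
      ≤ (if IsBox lam nu (i0 + 1) c ∧ T.box (i0 + 1) c = v then 1 else 0) := by
    split_ifs with h h' h'
    · exact le_rfl
    · exact absurd ⟨h.1, h.2.1⟩ h'
    · omega
    · exact le_rfl
  have h2 : (if v ∈ T.edge (i0 + 1) c ∧ 2 * (i0 + 1) + 1 ≤ r then 1 else 0)
      ≤ (if v ∈ T.edge (i0 + 1) c then 1 else 0) := by
    split_ifs with h h' h'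
    · exact le_rfl
    · exact absurd h.1 h'
    · omega
    · exact le_rfl
  omega

lemma count_colWord (v c : ℕ) :
    (((List.range nu.len).flatMap fun i0 =>
        T.boxWord (i0 + 1) c ++ T.edgeWord (i0 + 1) c).count v) = colCnt T v c := by
  rw [count_flatMap]
  have : ∀ i0 : ℕ, ((T.boxWord (i0 + 1) c ++ T.edgeWord (i0 + 1) c).count v)
      = ((if IsBox lam nu (i0 + 1) c ∧ T.box (i0 + 1) c = v then 1 else 0) +
          (if v ∈ T.edge (i0 + 1) c then 1 else 0)) := by
    intro i0
    rw [List.count_append, count_boxWord, count_edgeWord]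
  simp_rw [this]
  exact sum_map_range _ _

lemma wc_split (j₀ : ℕ) (h1 : 1 ≤ j₀) (hM : j₀ ≤ nu.part 1) :
    ∃ u w : List ℕ, T.wc = u ++ w ∧
      ∀ v, u.count v = ∑ c ∈ Finset.Icc j₀ (nu.part 1), colCnt T v c := by
  classical
  set M := nu.part 1 with hMdef
  set f : ℕ → List ℕ := fun j0 => (List.range nu.len).flatMap fun i0 =>
    T.boxWord (i0 + 1) (j0 + 1) ++ T.edgeWord (i0 + 1) (j0 + 1) with hf
  have hw : T.wc = (List.range M).reverse.flatMap f := rfl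
  have hM' : M = (j₀ - 1) + (M - j₀ + 1) := by omega
  refine ⟨(((List.range (M - j₀ + 1)).map fun t => (j₀ - 1) + t).reverse).flatMap f,
    ((List.range (j₀ - 1)).reverse).flatMap f, ?_, ?_⟩
  · rw [hw]
    conv_lhs => rw [hM']
    rw [List.range_add, List.reverse_append, List.flatMap_append]
  · intro v
    rw [count_flatMap, List.map_reverse, List.sum_reverse]
    rw [List.map_map, sum_map_range]
    rw [show Finset.Icc j₀ M = Finset.Ico j₀ (M + 1) from (Finset.Ico_add_one_right_eq_Icc j₀ M).symm]
    rw [Finset.sum_Ico_eq_sum_range]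
    rw [show M + 1 - j₀ = M - j₀ + 1 by omega]
    apply Finset.sum_congr rfl
    intro t _
    have hidx : (j₀ - 1) + t + 1 = j₀ + t := by omega
    show (f ((j₀ - 1) + t)).count v = colCnt T v (j₀ + t)
    rw [hf]
    simp only []
    rw [hidx]
    exact count_colWord T v (j₀ + t)

/-- Cross lemma: if `k+1` occurs in column `j₀` at a row index `≤ 2i`, then every
occurrence of `k` in a column weakly right of `j₀` is in a row `< i` (strictly
above for boxes, and the edge row `a + 1/2` has `a < i`). -/
lemma K2 {k i b j₀ c a : ℕ}
    (hocc : (IsBox lam nu b j₀ ∧ T.box b j₀ = k + 1 ∧ b ≤ i)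
      ∨ ((k + 1) ∈ T.edge b j₀ ∧ b < i))
    (hcol : j₀ ≤ c)
    (hkocc : (IsBox lam nu a c ∧ T.box a c = k) ∨ (k ∈ T.edge a c)) :
    a < i := by
  by_contra hcon
  push_neg at hcon  -- i ≤ a
  rcases hocc with ⟨hbb, hlab, hbi⟩ | ⟨hme, hbi⟩
  · -- k+1 in the box (b, j₀)
    have hba : b ≤ a := le_trans hbi hcon
    rcases hkocc with ⟨hba', hlab'⟩ | hme'
    · -- k in box (a,c)
      have hbc : IsBox lam nu b c :=
        ⟨hbb.1, lt_of_lt_of_le hbb.2.1 hcol, le_trans hba'.2.2 (part_anti nu hba)⟩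
      have h1 : T.box b j₀ ≤ T.box b c := box_mono_row T hbb c hcol hbc.2.2
      have h2 : T.box b c ≤ T.box a c := box_mono_col T hbc a hba hba'
      omega
    · -- k in edge (a,c)
      obtain ⟨ha1, hc1, hcu, _⟩ := isEdge_of_mem T hme'
      have hbac : IsBox lam nu a c :=
        ⟨ha1, by have h := part_anti lam hba; have := hbb.2.1; omega, hcu⟩
      have hbc : IsBox lam nu b c :=
        ⟨hbb.1, lt_of_lt_of_le hbb.2.1 hcol, le_trans hcu (part_anti nu hba)⟩
      have h1 : T.box b j₀ ≤ T.box b c := box_mono_row T hbb c hcol hbc.2.2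
      have h2 : T.box b c ≤ T.box a c := box_mono_col T hbc a hba hbac
      have h3 := T.edge_gt_box a c hbac k hme'
      omega
  · -- k+1 in the edge (b + 1/2, j₀)
    obtain ⟨hb1, hj1, hju, hjl⟩ := isEdge_of_mem T hme
    have hba : b + 1 ≤ a := by omega
    rcases hkocc with ⟨hba', hlab'⟩ | hme'
    · -- k in box (a,c)
      have hb1c : IsBox lam nu (b + 1) c :=
        ⟨by omega, lt_of_lt_of_le hjl hcol, le_trans hba'.2.2 (part_anti nu hba)⟩
      have hb1j : IsBox lam nu (b + 1) j₀ :=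
        ⟨by omega, hjl, le_trans hcol hb1c.2.2⟩
      have h0 := T.edge_lt_box b j₀ hb1j (k + 1) hme
      have h1 : T.box (b + 1) j₀ ≤ T.box (b + 1) c := box_mono_row T hb1j c hcol hb1c.2.2
      have h2 : T.box (b + 1) c ≤ T.box a c := box_mono_col T hb1c a hba hba'
      omega
    · -- k in edge (a,c)
      obtain ⟨ha1, hc1, hcu, _⟩ := isEdge_of_mem T hme'
      have hbac : IsBox lam nu a c :=
        ⟨ha1, lt_of_le_of_lt (part_anti lam hba) (lt_of_lt_of_le hjl hcol), hcu⟩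
      have hb1c : IsBox lam nu (b + 1) c :=
        ⟨by omega, lt_of_lt_of_le hjl hcol, le_trans hcu (part_anti nu hba)⟩
      have hb1j : IsBox lam nu (b + 1) j₀ :=
        ⟨by omega, hjl, le_trans hcol hb1c.2.2⟩
      have h0 := T.edge_lt_box b j₀ hb1j (k + 1) hme
      have h1 : T.box (b + 1) j₀ ≤ T.box (b + 1) c := box_mono_row T hb1j c hcol hb1c.2.2
      have h2 : T.box (b + 1) c ≤ T.box a c := box_mono_col T hb1c a hba hbac
      have h3 := T.edge_gt_box a c hbac k hme'
      omega

/-- total number of occurrences of the label `v` at row index `≤ r`. -/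
noncomputable def NN (v r : ℕ) : ℕ :=
  ∑ c ∈ Finset.Icc 1 (nu.part 1), colCntR T v c r

/-- The core lattice inequality: occurrences of `k+1` weakly above row `i`
are dominated by occurrences of `k` strictly above row `i`. -/
lemma CL (k i : ℕ) (hk : 1 ≤ k) (hi : 1 ≤ i) (hT : IsLatticeWord T.wc) :
    NN T (k + 1) (2 * i) ≤ NN T k (2 * i - 1) := by
  classical
  by_cases hz : NN T (k + 1) (2 * i) = 0
  · omega
  -- choose the minimal column j₀ containing k+1 at row index ≤ 2i
  have hne : ((Finset.Icc 1 (nu.part 1)).filter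
      fun c => 0 < colCntR T (k + 1) c (2 * i)).Nonempty := by
    by_contra hc
    rw [Finset.not_nonempty_iff_eq_empty, Finset.filter_eq_empty_iff] at hc
    apply hz
    apply Finset.sum_eq_zero
    intro c hcm
    have := hc hcm
    omega
  obtain ⟨j₀, hj₀m, hj₀min⟩ := Finset.exists_min_image _ id hne
  rw [Finset.mem_filter, Finset.mem_Icc] at hj₀m
  obtain ⟨⟨hj₀1, hj₀M⟩, hj₀pos⟩ := hj₀m
  -- extract the occurrence of k+1 in column j₀
  have hj₀pos' := hj₀pos
  rw [colCntR] at hj₀pos'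
  obtain ⟨i0, hi0m, hi0ne⟩ := Finset.exists_ne_zero_of_sum_ne_zero (by omega :
    ¬ (∑ i0 ∈ Finset.range nu.len,
      ((if IsBox lam nu (i0 + 1) j₀ ∧ T.box (i0 + 1) j₀ = k + 1 ∧ 2 * (i0 + 1) ≤ 2 * i
          then 1 else 0) +
        (if (k + 1) ∈ T.edge (i0 + 1) j₀ ∧ 2 * (i0 + 1) + 1 ≤ 2 * i then 1 else 0)) = 0))
  have hocc : (IsBox lam nu (i0 + 1) j₀ ∧ T.box (i0 + 1) j₀ = k + 1 ∧ i0 + 1 ≤ i)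
      ∨ ((k + 1) ∈ T.edge (i0 + 1) j₀ ∧ i0 + 1 < i) := by
    by_cases hb : IsBox lam nu (i0 + 1) j₀ ∧ T.box (i0 + 1) j₀ = k + 1 ∧ 2 * (i0 + 1) ≤ 2 * i
    · exact Or.inl ⟨hb.1, hb.2.1, by omega⟩
    · rw [if_neg hb] at hi0ne
      by_cases he : (k + 1) ∈ T.edge (i0 + 1) j₀ ∧ 2 * (i0 + 1) + 1 ≤ 2 * i
      · exact Or.inr ⟨he.1, by omega⟩
      · rw [if_neg he] at hi0ne
        omega
  -- minimality : columns < j₀ contain no k+1 at row index ≤ 2i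
  have hmin : ∀ c ∈ Finset.Icc 1 (nu.part 1), c < j₀ → colCntR T (k + 1) c (2 * i) = 0 := by
    intro c hcm hlt
    by_contra hc
    have hmem : c ∈ (Finset.Icc 1 (nu.part 1)).filter
        fun c => 0 < colCntR T (k + 1) c (2 * i) := by
      rw [Finset.mem_filter]
      exact ⟨hcm, by omega⟩
    have := hj₀min c hmem
    simp only [id] at this
    omega
  -- split the column word
  obtain ⟨u, w, hsplit, hcount⟩ := wc_split T j₀ hj₀1 hj₀M
  have hlat := hT k hk u.length
  rw [hsplit, List.take_left] at hlat
  rw [hcount, hcount] at hlat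
  -- LHS ≤ count of k+1 in u
  have hL : NN T (k + 1) (2 * i) ≤ ∑ c ∈ Finset.Icc j₀ (nu.part 1), colCnt T (k + 1) c := by
    have e1 : NN T (k + 1) (2 * i)
        = ∑ c ∈ Finset.Icc j₀ (nu.part 1), colCntR T (k + 1) c (2 * i) := by
      rw [NN]
      rw [← Finset.sum_subset (Finset.Icc_subset_Icc_left hj₀1)]
      intro c hcm hnc
      apply hmin c hcm
      rw [Finset.mem_Icc] at hcm hnc
      omega
    rw [e1]
    exact Finset.sum_le_sum fun c _ => colCntR_le_colCnt T (k + 1) c (2 * i)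
  -- count of k in u ≤ RHS
  have hR : ∑ c ∈ Finset.Icc j₀ (nu.part 1), colCnt T k c ≤ NN T k (2 * i - 1) := by
    have e2 : ∀ c ∈ Finset.Icc j₀ (nu.part 1), colCnt T k c = colCntR T k c (2 * i - 1) := by
      intro c hcm
      rw [Finset.mem_Icc] at hcm
      apply Finset.sum_congr rfl
      intro a0 _
      have hbx : (if IsBox lam nu (a0 + 1) c ∧ T.box (a0 + 1) c = k then 1 else 0)
          = (if IsBox lam nu (a0 + 1) c ∧ T.box (a0 + 1) c = k ∧ 2 * (a0 + 1) ≤ 2 * i - 1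
              then 1 else 0) := by
        by_cases hc : IsBox lam nu (a0 + 1) c ∧ T.box (a0 + 1) c = k
        · have := K2 T hocc hcm.1 (Or.inl hc)
          rw [if_pos hc, if_pos ⟨hc.1, hc.2, by omega⟩]
        · rw [if_neg hc, if_neg (fun h => hc ⟨h.1, h.2.1⟩)]
      have hed : (if k ∈ T.edge (a0 + 1) c then 1 else 0)
          = (if k ∈ T.edge (a0 + 1) c ∧ 2 * (a0 + 1) + 1 ≤ 2 * i - 1 then 1 else 0) := by
        by_cases hc : k ∈ T.edge (a0 + 1) c
        · have := K2 T hocc hcm.1 (Or.inr hc)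
          rw [if_pos hc, if_pos ⟨hc, by omega⟩]
        · rw [if_neg hc, if_neg (fun h => hc h.1)]
      rw [hbx, hed]
    rw [Finset.sum_congr rfl e2]
    apply Finset.sum_le_sum_of_subset (Finset.Icc_subset_Icc_left hj₀1)
  omega

lemma NN_eq_rows (v r : ℕ) :
    NN T v r = ∑ i' ∈ Finset.Icc 1 nu.len,
      ((if 2 * i' ≤ r then T.rbox v i' else 0) + (if 2 * i' + 1 ≤ r then T.redge v i' else 0)) := by
  rw [NN]
  simp_rw [colCntR]
  rw [Finset.sum_comm]
  rw [show Finset.Icc 1 nu.len = Finset.Ico 1 (nu.len + 1) from (Finset.Ico_add_one_right_eq_Icc 1 nu.len).symm]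
  rw [Finset.sum_Ico_eq_sum_range]
  rw [show nu.len + 1 - 1 = nu.len by omega]
  apply Finset.sum_congr rfl
  intro i0 _
  rw [show 1 + i0 = i0 + 1 by omega]
  rw [Finset.sum_add_distrib]
  congr 1
  · by_cases hr : 2 * (i0 + 1) ≤ r
    · rw [if_pos hr, rbox_eq_card, Finset.card_filter]
      apply Finset.sum_congr rfl
      intro c _
      by_cases hb : IsBox lam nu (i0 + 1) c ∧ T.box (i0 + 1) c = v
      · rw [if_pos ⟨hb.1, hb.2, hr⟩, if_pos hb]
      · rw [if_neg (fun h => hb ⟨h.1, h.2.1⟩), if_neg hb]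
    · rw [if_neg hr]
      apply Finset.sum_eq_zero
      intro c _
      rw [if_neg (fun h => hr h.2.2)]
  · by_cases hr : 2 * (i0 + 1) + 1 ≤ r
    · rw [if_pos hr, redge_eq_card, Finset.card_filter]
      apply Finset.sum_congr rfl
      intro c _
      by_cases hb : v ∈ T.edge (i0 + 1) c
      · rw [if_pos ⟨hb, hr⟩, if_pos hb]
      · rw [if_neg (fun h => hb h.1), if_neg hb]
    · rw [if_neg hr]
      apply Finset.sum_eq_zero
      intro c _
      rw [if_neg (fun h => hr h.2)]

lemma sum_ite_le (f : ℕ → ℕ) (hf : ∀ i', nu.len < i' → f i' = 0) (a : ℕ) :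
    ∑ i' ∈ Finset.Icc 1 nu.len, (if i' ≤ a then f i' else 0) = ∑ i' ∈ Finset.Icc 1 a, f i' := by
  rw [← Finset.sum_filter]
  have h1 : (Finset.Icc 1 nu.len).filter (fun i' => i' ≤ a) = Finset.Icc 1 (min nu.len a) := by
    ext x
    simp only [Finset.mem_filter, Finset.mem_Icc]
    omega
  rw [h1]
  rcases le_total nu.len a with h | h
  · rw [min_eq_left h]
    apply Finset.sum_subset (Finset.Icc_subset_Icc_right h)
    intro x hx hnx
    rw [Finset.mem_Icc] at hx hnx
    exact hf x (by omega)
  · rw [min_eq_right h]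

lemma F_nat (k i : ℕ) (hk : 1 ≤ k) (hi : 1 ≤ i) (hT : IsLatticeWord T.wc) :
    T.rbox (k + 1) i + ∑ i' ∈ Finset.Ico 1 i, (T.rbox (k + 1) i' + T.redge (k + 1) i')
      ≤ ∑ i' ∈ Finset.Ico 1 i, (T.rbox k i' + T.redge k i') := by
  have h := CL T k i hk hi hT
  rw [NN_eq_rows, NN_eq_rows] at h
  have hL : ∑ i' ∈ Finset.Icc 1 nu.len,
      ((if 2 * i' ≤ 2 * i then T.rbox (k + 1) i' else 0) +
        (if 2 * i' + 1 ≤ 2 * i then T.redge (k + 1) i' else 0))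
      = ∑ i' ∈ Finset.Icc 1 i, T.rbox (k + 1) i'
        + ∑ i' ∈ Finset.Icc 1 (i - 1), T.redge (k + 1) i' := by
    rw [Finset.sum_add_distrib]
    congr 1
    · rw [← sum_ite_le _ (fun i' h => rbox_zero_high T h) i]
      apply Finset.sum_congr rfl
      intro i' _
      exact if_congr (by omega) rfl rfl
    · rw [← sum_ite_le _ (fun i' h => redge_zero_high T h) (i - 1)]
      apply Finset.sum_congr rfl
      intro i' _
      exact if_congr (by omega) rfl rfl
  have hR : ∑ i' ∈ Finset.Icc 1 nu.len,
      ((if 2 * i' ≤ 2 * i - 1 then T.rbox k i' else 0) +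
        (if 2 * i' + 1 ≤ 2 * i - 1 then T.redge k i' else 0))
      = ∑ i' ∈ Finset.Icc 1 (i - 1), T.rbox k i'
        + ∑ i' ∈ Finset.Icc 1 (i - 1), T.redge k i' := by
    rw [Finset.sum_add_distrib]
    congr 1
    · rw [← sum_ite_le _ (fun i' h => rbox_zero_high T h) (i - 1)]
      apply Finset.sum_congr rfl
      intro i' _
      exact if_congr (by omega) rfl rfl
    · rw [← sum_ite_le _ (fun i' h => redge_zero_high T h) (i - 1)]
      apply Finset.sum_congr rfl
      intro i' _
      exact if_congr (by omega) rfl rfl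
  rw [hL, hR] at h
  have hIco : Finset.Ico 1 i = Finset.Icc 1 (i - 1) := by
    ext x
    simp only [Finset.mem_Ico, Finset.mem_Icc]
    omega
  have hsplit : ∑ i' ∈ Finset.Icc 1 i, T.rbox (k + 1) i'
      = T.rbox (k + 1) i + ∑ i' ∈ Finset.Ico 1 i, T.rbox (k + 1) i' := by
    rw [show Finset.Icc 1 i = Finset.Ico 1 (i + 1) from (Finset.Ico_add_one_right_eq_Icc 1 i).symm,
      Finset.sum_Ico_succ_top (by omega)]
    omega
  rw [hsplit, hIco] at h
  rw [hIco, Finset.sum_add_distrib, Finset.sum_add_distrib]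
  omega

lemma E_nat (k : ℕ) (hk : 1 ≤ k) (hT : IsLatticeWord T.wc) : NN T k (2 * k - 2) = 0 := by
  induction k with
  | zero => omega
  | succ k ih =>
    rcases Nat.eq_zero_or_pos k with hk0 | hk0
    · subst hk0
      apply Finset.sum_eq_zero
      intro c _
      apply Finset.sum_eq_zero
      intro i0 _
      rw [if_neg (fun h => by omega), if_neg (fun h => by omega)]
      rfl
    · have h1 := CL T k k hk0 hk0 hT
      have h2 : NN T k (2 * k - 1) = NN T k (2 * k - 2) := by
        apply Finset.sum_congr rfl
        intro c _
        apply Finset.sum_congr rfl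
        intro i0 _
        congr 1
        · exact if_congr (by constructor <;> (rintro ⟨a, b, c'⟩; exact ⟨a, b, by omega⟩)) rfl rfl
        · by_cases hm : k ∈ T.edge (i0 + 1) c
          · have := T.not_too_high (i0 + 1) c k hm
            rw [if_neg (fun h => by omega), if_neg (fun h => by omega)]
          · rw [if_neg (fun h => hm h.1), if_neg (fun h => hm h.1)]
      rw [h2, ih hk0] at h1
      have : 2 * (k + 1) - 2 = 2 * k := by omega
      rw [this]
      omega

lemma rbox_eq_zero_of_lt {k i : ℕ} (h : i < k) (hT : IsLatticeWord T.wc) : T.rbox k i = 0 := by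
  rcases Nat.eq_zero_or_pos k with hk0 | hk0
  · exact rbox_eq_zero T (by omega)
  rcases Nat.lt_or_ge i 1 with hi0 | hi1
  · exact rbox_eq_zero T (by omega)
  rcases Nat.lt_or_ge nu.len i with hL | hL
  · exact rbox_zero_high T hL
  have hE := E_nat T k hk0 hT
  rw [NN_eq_rows] at hE
  have hterm := (Finset.sum_eq_zero_iff.mp hE) i (Finset.mem_Icc.mpr ⟨hi1, hL⟩)
  have hcond : 2 * i ≤ 2 * k - 2 := by omega
  rw [if_pos hcond] at hterm
  omega

end ARY
/-- If `T ∈ EdgeTab(λ,μ,ν)` (with `λ ⊆ ν` packaged in `T.subset`), then the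
statistics `(r_k^i(T), r_k^{i+1/2}(T))` satisfy conditions (A)–(F) for `(λ,μ,ν)`. -/
theorem statistics_satisfy_AF (lam mu nu : NPartition) (T : EdgeTableau lam mu nu)
    (hT : T ∈ EdgeTab lam mu nu) :
    SatisfiesAF lam mu nu (fun k i => (T.rbox k i : ℝ)) (fun k i => (T.redge k i : ℝ)) := by
  have hlat : IsLatticeWord T.wc := hT
  refine ⟨?_, ?_, ?_, ?_, ?_, ?_, ?_⟩
  · intro k i h
    constructor
    · beta_reduce
      exact_mod_cast ARY.rbox_eq_zero T h
    · beta_reduce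
      exact_mod_cast ARY.redge_eq_zero T h
  · intro k i
    exact ⟨Nat.cast_nonneg _, Nat.cast_nonneg _⟩
  · intro i hi
    beta_reduce
    exact_mod_cast ARY.B_nat T i hi
  · intro k hk
    beta_reduce
    exact_mod_cast ARY.C_nat T k hk
  · intro k i hk _ hi _
    have hIco : Finset.Ico 1 k = Finset.Icc 1 (k - 1) := by
      ext x
      simp only [Finset.mem_Ico, Finset.mem_Icc]
      omega
    rw [hIco, le_sub_iff_add_le]
    beta_reduce
    exact_mod_cast ARY.D_nat T k i hk hi
  · intro k i h
    constructor
    · beta_reduce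
      exact_mod_cast ARY.rbox_eq_zero_of_lt T h hlat
    · beta_reduce
      exact_mod_cast ARY.redge_eq_zero_of_lt T h
  · intro k i hk _ hi _
    beta_reduce
    exact_mod_cast ARY.F_nat T k i hk hi hlat
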